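/- Let π = (π_1,…,π_K) be a probability vector with π_k > 0 for all k, and let ν_1,…,ν_K ∈ ℝ^d span ℝ^d and satisfy ν_k^T ν_j ∈ (0,1) for all k, j. Set Δ = Σ_{k=1}^K π_k ν_k ν_k^T and, for x_0 ∈ ℝ^d, Σ(x_0) = Δ^{-1} (Σ_{j=1}^K π_j ν_j ν_j^T (x_0^T ν_j − (x_0^T ν_j)^2)) Δ^{-1}. Then for each k ∈ {1,…,K}, the matrix Σ(ν_k) is symmetric positive definite. -/

import Mathlib

/-!
Writing `V` for the `K × d` matrix with rows `νⱼ`, any `∑ⱼ cⱼ νⱼνⱼᵀ` equals `Vᵀ diag(c) V`; it is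
positive definite when all `cⱼ > 0`, since rows spanning `ℝ^d` make `V` injective.
This applies to `Δ` (weights `πⱼ`) and to the middle factor `S` of `Σ(νₖ)` (weights
`πⱼ pⱼ (1 - pⱼ)` with `pⱼ = νₖᵀνⱼ ∈ (0,1)`), and `Δ⁻¹ S Δ⁻¹` is a congruence of `S` by the
symmetric invertible matrix `Δ⁻¹`.
-/

namespace Matrix

variable {ι n R : Type*}

theorem mulVec_injective_of_span_range_eq_top [Fintype n] [CommRing R] {v : ι → n → R}
    (hv : Submodule.span R (Set.range v) = ⊤) : Function.Injective (of v).mulVec := by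
  rw [← coe_mulVecLin, ← LinearMap.ker_eq_bot, Submodule.eq_bot_iff]
  intro x hx
  have hker : Submodule.span R (Set.range v) ≤ LinearMap.ker (dotProductBilin R R x) := by
    rw [Submodule.span_le]
    rintro _ ⟨i, rfl⟩
    simpa [mulVec, dotProduct_comm] using congrFun hx i
  refine dotProduct_eq_zero x fun w => ?_
  simpa using hker (hv ▸ Submodule.mem_top : w ∈ Submodule.span R (Set.range v))

theorem sum_smul_vecMulVec_self [Fintype ι] [CommSemiring R] [DecidableEq ι] (c : ι → R)
    (v : ι → n → R) :
    ∑ i, c i • vecMulVec (v i) (v i) = (of v)ᵀ * diagonal c * of v := by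
  ext a b
  simp only [sum_apply, smul_apply, vecMulVec_apply, smul_eq_mul, mul_apply, transpose_apply,
    of_apply, diagonal_apply, mul_ite, mul_zero, Finset.sum_ite_eq', Finset.mem_univ, ↓reduceIte]
  exact Finset.sum_congr rfl fun _ _ => by ring

theorem posDef_sum_smul_vecMulVec_self [Fintype ι] [Fintype n] [CommRing R] [PartialOrder R]
    [StarRing R] [TrivialStar R] [StarOrderedRing R] [NoZeroDivisors R] {c : ι → R}
    (hc : ∀ i, 0 < c i) {v : ι → n → R} (hv : Submodule.span R (Set.range v) = ⊤) :
    (∑ i, c i • vecMulVec (v i) (v i)).PosDef := by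
  classical
  rw [sum_smul_vecMulVec_self, ← conjTranspose_eq_transpose_of_trivial]
  exact (PosDef.diagonal hc).conjTranspose_mul_mul_same (mulVec_injective_of_span_range_eq_top hv)

theorem PosDef.inv_mul_mul_inv {K : Type*} [Fintype n] [Field K] [PartialOrder K] [StarRing K]
    [DecidableEq n] {A B : Matrix n n K} (hA : A.PosDef) (hB : B.PosDef) :
    (A⁻¹ * B * A⁻¹).PosDef := by
  have h := (IsUnit.posDef_star_left_conjugate_iff hA.inv.isUnit).mpr hB
  rwa [star_eq_conjTranspose, hA.inv.isHermitian.eq] at h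

end Matrix

open Matrix

theorem ase_limit_covariance_posDef_general {K d : ℕ}
    (π : Fin K → ℝ) (hπ : ∀ k, 0 < π k)
    (ν : Fin K → Fin d → ℝ)
    (hspan : Submodule.span ℝ (Set.range ν) = ⊤)
    (hB : ∀ k j, ν k ⬝ᵥ ν j ∈ Set.Ioo (0 : ℝ) 1) :
    ∀ k : Fin K,
      ((∑ m, π m • Matrix.vecMulVec (ν m) (ν m))⁻¹ *
          (∑ j, (π j * (ν k ⬝ᵥ ν j - (ν k ⬝ᵥ ν j) ^ 2)) • Matrix.vecMulVec (ν j) (ν j)) *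
          (∑ m, π m • Matrix.vecMulVec (ν m) (ν m))⁻¹).PosDef := by
  intro k
  refine (posDef_sum_smul_vecMulVec_self hπ hspan).inv_mul_mul_inv
    (posDef_sum_smul_vecMulVec_self (fun j => ?_) hspan)
  obtain ⟨hpos, hlt⟩ := hB k j
  exact mul_pos (hπ j) (by nlinarith)

/-- Under the stochastic blockmodel assumptions (positive mixture weights, latent positions
`ν₁, …, ν_K` spanning `ℝ^d`, and block probabilities `νₖᵀνⱼ ∈ (0,1)`), the ASE limiting
covariance matrix `Σ(νₖ) = Δ⁻¹ (Σⱼ πⱼ νⱼνⱼᵀ (νₖᵀνⱼ - (νₖᵀνⱼ)²)) Δ⁻¹`, where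
`Δ = Σₖ πₖ νₖνₖᵀ`, is symmetric positive definite for each `k`. -/
theorem ase_limit_covariance_posDef {K d : ℕ}
    (π : Fin K → ℝ) (hπ : ∀ k, 0 < π k) (hπsum : ∑ k, π k = 1)
    (ν : Fin K → Fin d → ℝ)
    (hspan : Submodule.span ℝ (Set.range ν) = ⊤)
    (hB : ∀ k j, ν k ⬝ᵥ ν j ∈ Set.Ioo (0 : ℝ) 1) :
    ∀ k : Fin K,
      ((∑ m, π m • Matrix.vecMulVec (ν m) (ν m))⁻¹ *
          (∑ j, (π j * (ν k ⬝ᵥ ν j - (ν k ⬝ᵥ ν j) ^ 2)) • Matrix.vecMulVec (ν j) (ν j)) *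
          (∑ m, π m • Matrix.vecMulVec (ν m) (ν m))⁻¹).PosDef :=
  ase_limit_covariance_posDef_general π hπ ν hspan hB
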